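/- In the quadratic box-constrained discrete NEP setting, suppose at the first sweep of the Gauss–Seidel lower-bounding method the integer s for coordinate (1,1) satisfies: θ_1 evaluated with first coordinate s−1 at the reference point z exceeds θ_1 with first coordinate s, where z^μ_j = l^μ_j if Q^1_{1j} ≤ 0 (resp. C^1 entry ≤ 0) and z^μ_j = u^μ_j otherwise, for all (μ,j) ≠ (1,1). Then every x̄ ∈ X ∩ ℤ^n with x̄^1_1 < s satisfies θ_1(x̄) > θ_1(x̃), where x̃ agrees with x̄ except x̃^1_1 = s; hence no point with x̄^1_1 < s is a discrete Nash equilibrium. -/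

import Mathlib

open Finset

variable {ι I : Type*}

/-- Quadratic objective of player `ν` in the flattened-variable formulation:
`θ_ν(x) = (1/2) xᵛᵀ Q xᵛ + (C x⁻ᵛ + b)ᵀ xᵛ`, where `A` collects both the
block `Qᵛ` (entries with both indices owned by `ν`) and the coupling matrices
`Cᵛ` (entries whose row is owned by `ν` and whose column is not). -/
noncomputable def quadObj [Fintype I] [DecidableEq ι]
    (player : I → ι) (A : I → I → ℝ) (b : I → ℝ) (ν : ι) (x : I → ℝ) : ℝ :=
  (1 / 2) * ∑ i ∈ univ.filter (fun i => player i = ν),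
      ∑ j ∈ univ.filter (fun j => player j = ν), A i j * x i * x j
  + ∑ i ∈ univ.filter (fun i => player i = ν),
      ((∑ j ∈ univ.filter (fun j => player j ≠ ν), A i j * x j) + b i) * x i

/-- Discrete Nash equilibrium of the quadratic box-constrained game. -/
def quadIsEq [Fintype I] [DecidableEq ι]
    (player : I → ι) (A : I → I → ℝ) (b : I → ℝ) (l u : I → ℤ) (x : I → ℤ) : Prop :=
  (∀ j, l j ≤ x j ∧ x j ≤ u j) ∧
  ∀ ν, ∀ y : I → ℤ, (∀ j, l j ≤ y j ∧ y j ≤ u j) →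
    (∀ j, player j ≠ ν → y j = x j) →
    quadObj player A b ν (fun t => (x t : ℝ)) ≤ quadObj player A b ν (fun t => (y t : ℝ))

noncomputable def Lcoef [Fintype I] [DecidableEq I] [DecidableEq ι]
    (player : I → ι) (A : I → I → ℝ) (b : I → ℝ) (i : I) (x : I → ℝ) : ℝ :=
  (∑ j ∈ (univ.filter (fun j => player j = player i)).erase i, A i j * x j)
  + (∑ j ∈ univ.filter (fun j => player j ≠ player i), A i j * x j) + b i

lemma quadObj_update_sub [Fintype I] [DecidableEq I] [DecidableEq ι]
    (player : I → ι) (A : I → I → ℝ) (b : I → ℝ)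
    (hsym : ∀ p q, player p = player q → A p q = A q p)
    (i : I) (x : I → ℝ) (t t' : ℝ) :
    quadObj player A b (player i) (Function.update x i t)
      - quadObj player A b (player i) (Function.update x i t')
    = (1/2) * A i i * (t^2 - t'^2) + Lcoef player A b i x * (t - t') := by
  set S := univ.filter (fun j => player j = player i) with hS
  set T := univ.filter (fun j => player j ≠ player i) with hT
  have hi : i ∈ S := by simp [hS]
  have hmemS : ∀ p ∈ S.erase i, p ≠ i ∧ player p = player i := by
    intro p hp
    rw [Finset.mem_erase] at hp
    refine ⟨hp.1, ?_⟩
    have := hp.2; rw [hS, Finset.mem_filter] at this; exact this.2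
  have hmemT : ∀ q ∈ T, q ≠ i := by
    intro q hq
    rw [hT, Finset.mem_filter] at hq
    intro h; exact hq.2 (by rw [h])
  have hquad : ∀ r : ℝ,
      ∑ p ∈ S, ∑ q ∈ S, A p q * (Function.update x i r p) * (Function.update x i r q)
      = A i i * r * r + (2 * ∑ q ∈ S.erase i, A i q * x q) * r
        + ∑ p ∈ S.erase i, ∑ q ∈ S.erase i, A p q * x p * x q := by
    intro r
    rw [← Finset.add_sum_erase S _ hi]
    rw [← Finset.add_sum_erase S (fun q => A i q * (Function.update x i r i) * (Function.update x i r q)) hi]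
    have h1 : ∀ q ∈ S.erase i,
        A i q * (Function.update x i r i) * (Function.update x i r q) = A i q * x q * r := by
      intro q hq
      rw [Function.update_self, Function.update_of_ne (hmemS q hq).1]
      ring
    have h2 : ∀ p ∈ S.erase i,
        ∑ q ∈ S, A p q * (Function.update x i r p) * (Function.update x i r q)
        = A i p * x p * r + ∑ q ∈ S.erase i, A p q * x p * x q := by
      intro p hp
      rw [← Finset.add_sum_erase S (fun q => A p q * (Function.update x i r p) * (Function.update x i r q)) hi]
      have h3 : ∀ q ∈ S.erase i, A p q * Function.update x i r p * Function.update x i r q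
          = A p q * x p * x q := by
        intro q hq
        rw [Function.update_of_ne (hmemS p hp).1, Function.update_of_ne (hmemS q hq).1]
      rw [Finset.sum_congr rfl h3, Function.update_self,
        Function.update_of_ne (hmemS p hp).1, hsym p i (hmemS p hp).2]
    rw [Finset.sum_congr rfl h1, Finset.sum_congr rfl h2, Finset.sum_add_distrib,
      Function.update_self, ← Finset.sum_mul]
    ring
  have hlin : ∀ r : ℝ,
      ∑ p ∈ S, ((∑ q ∈ T, A p q * (Function.update x i r q)) + b p) * (Function.update x i r p)
      = ((∑ q ∈ T, A i q * x q) + b i) * r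
        + ∑ p ∈ S.erase i, ((∑ q ∈ T, A p q * x q) + b p) * x p := by
    intro r
    rw [← Finset.add_sum_erase S _ hi, Function.update_self]
    have hTfix : ∀ p, ∑ q ∈ T, A p q * (Function.update x i r q) = ∑ q ∈ T, A p q * x q := by
      intro p
      apply Finset.sum_congr rfl
      intro q hq
      rw [Function.update_of_ne (hmemT q hq)]
    rw [hTfix i]
    congr 1
    apply Finset.sum_congr rfl
    intro p hp
    rw [hTfix p, Function.update_of_ne (hmemS p hp).1]
  rw [quadObj, quadObj, hquad t, hquad t', hlin t, hlin t', Lcoef]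
  ring

/-- First-sweep lemma of the Gauss–Seidel lower-bounding method: with `z`
built from the bounds by the sign rule (`z j = l j` if the coefficient
`A i j ≤ 0`, otherwise `z j = u j`), if the one-dimensional objective along
coordinate `i` strictly decreases from `s-1` to `s` at `z`, then every integer
feasible `x̄` with `x̄ i < s` satisfies `θ(x̄) > θ(x̃)` where `x̃` raises
coordinate `i` to `s`; hence `x̄` is not a discrete Nash equilibrium. -/
theorem stmt10 [Fintype I] [DecidableEq I] [DecidableEq ι]
    (player : I → ι) (A : I → I → ℝ) (b : I → ℝ) (l u : I → ℤ)
    (hlu : ∀ j, l j ≤ u j)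
    (hsym : ∀ i j, player i = player j → A i j = A j i)
    (i : I) (hQii : 0 < A i i)
    (z : I → ℝ)
    (hz : ∀ j, j ≠ i → z j = if A i j ≤ 0 then (l j : ℝ) else (u j : ℝ))
    (s : ℤ) (hsl : l i ≤ s) (hsu : s ≤ u i)
    (hcond : l i ≤ s - 1 →
      quadObj player A b (player i) (Function.update z i ((s : ℝ) - 1))
        > quadObj player A b (player i) (Function.update z i (s : ℝ))) :
    ∀ xbar : I → ℤ, (∀ j, l j ≤ xbar j ∧ xbar j ≤ u j) → xbar i < s →
      (quadObj player A b (player i) (fun t => (xbar t : ℝ))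
          > quadObj player A b (player i) (fun t => ((Function.update xbar i s) t : ℝ)))
        ∧ ¬ quadIsEq player A b l u xbar := by
  intro xbar hxbar hxi
  have hls1 : l i ≤ s - 1 := by
    have := (hxbar i).1; omega
  -- extract the linear-coefficient inequality at z
  have hdz := quadObj_update_sub player A b hsym i z ((s : ℝ) - 1) (s : ℝ)
  have hLz : Lcoef player A b i z < (1/2) * A i i * (1 - 2 * (s : ℝ)) := by
    have h := hcond hls1
    have h2 : (1/2) * A i i * (((s:ℝ) - 1)^2 - (s:ℝ)^2)
        + Lcoef player A b i z * (((s:ℝ) - 1) - (s:ℝ)) > 0 := by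
      rw [← hdz]; linarith [h]
    nlinarith [h2]
  -- monotonicity of Lcoef
  set w : I → ℝ := fun t => (xbar t : ℝ) with hw
  have hLmono : Lcoef player A b i w ≤ Lcoef player A b i z := by
    unfold Lcoef
    have hterm : ∀ j : I, j ≠ i → A i j * w j ≤ A i j * z j := by
      intro j hj
      rw [hz j hj]
      rcases le_or_gt (A i j) 0 with h | h
      · rw [if_pos h]
        have hc : (l j : ℝ) ≤ w j := by simp only [hw]; exact_mod_cast (hxbar j).1
        exact mul_le_mul_of_nonpos_left hc h
      · rw [if_neg (not_le.mpr h)]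
        have hc : w j ≤ (u j : ℝ) := by simp only [hw]; exact_mod_cast (hxbar j).2
        exact mul_le_mul_of_nonneg_left hc h.le
    refine add_le_add (add_le_add (Finset.sum_le_sum ?_) (Finset.sum_le_sum ?_)) le_rfl
    · exact fun j hj => hterm j (Finset.ne_of_mem_erase hj)
    · intro j hj
      refine hterm j ?_
      rw [Finset.mem_filter] at hj
      intro h; exact hj.2 (by rw [h])
  -- rewrite the goal via updates of w
  set t : ℝ := (xbar i : ℝ) with ht
  have hts : t ≤ (s : ℝ) - 1 := by
    have h1 : xbar i ≤ s - 1 := by omega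
    have h2 : ((xbar i : ℤ) : ℝ) ≤ ((s - 1 : ℤ) : ℝ) := by exact_mod_cast h1
    rw [ht]; push_cast at h2; linarith
  have hW1 : (fun t => (xbar t : ℝ)) = Function.update w i t := by
    funext j
    by_cases h : j = i
    · subst h; rw [Function.update_self]
    · rw [Function.update_of_ne h]
  have hW2 : (fun t => ((Function.update xbar i s) t : ℝ)) = Function.update w i (s : ℝ) := by
    funext j
    by_cases h : j = i
    · subst h; simp
    · simp [Function.update_of_ne h, hw]
  have hdw := quadObj_update_sub player A b hsym i w t (s : ℝ)
  have hneg : (1/2) * A i i * (t + (s:ℝ)) + Lcoef player A b i w < 0 := by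
    nlinarith [mul_nonneg hQii.le (show (0:ℝ) ≤ (s:ℝ) - 1 - t by linarith)]
  have hgt : quadObj player A b (player i) (fun t => (xbar t : ℝ))
      > quadObj player A b (player i) (fun t => ((Function.update xbar i s) t : ℝ)) := by
    rw [hW1, hW2]
    have key : quadObj player A b (player i) (Function.update w i t)
        - quadObj player A b (player i) (Function.update w i (s:ℝ)) > 0 := by
      rw [hdw]
      nlinarith [mul_pos (show (0:ℝ) < (s:ℝ) - t by linarith)
        (show (0:ℝ) < -((1/2) * A i i * (t + (s:ℝ)) + Lcoef player A b i w) by linarith)]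
    linarith
  refine ⟨hgt, ?_⟩
  rintro ⟨hfeas, hbr⟩
  have hy : ∀ j, l j ≤ (Function.update xbar i s) j ∧ (Function.update xbar i s) j ≤ u j := by
    intro j
    by_cases h : j = i
    · subst h; rw [Function.update_self]; exact ⟨hsl, hsu⟩
    · rw [Function.update_of_ne h]; exact hxbar j
  have hoff : ∀ j, player j ≠ player i → (Function.update xbar i s) j = xbar j := by
    intro j hj
    refine Function.update_of_ne (fun h => hj (by rw [h])) _ _
  have := hbr (player i) (Function.update xbar i s) hy hoff
  linarith
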